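/- arXiv:math/0403467 — 3 statements merged into one kernel-verified Lean document; each statement's English description precedes it below -/
import Mathlib

section
/- Let A = S + g·hᵀ and B = S + g·kᵀ be stable real n×n matrices in companion form, and suppose X and Y are nonzero real symmetric positive semidefinite matrices with A·X + X·Aᵀ + B·Y + Y·Bᵀ = 0. Set Z = X + Y. Then ⟨k−h, Y·(k−h)⟩ > 0, and the vector w = ⟨k−h, Y·(k−h)⟩^{−1/2} · Y·(k−h) satisfies: (i) Π·S·Z·Π + Π·Z·Sᵀ·Π = 0; (ii) S·Z·g + Z·h + ⟨w, k−h⟩·w = 0; and (iii) Z − w·wᵀ is positive semidefinite. -/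
open Matrix

/-- A real square matrix is *stable* if every eigenvalue (over ℂ) has negative real part. -/
def IsStable {n : ℕ} (A : Matrix (Fin n) (Fin n) ℝ) : Prop :=
  ∀ μ : ℂ, μ ∈ spectrum ℂ (A.map (algebraMap ℝ ℂ)) → μ.re < 0

/-- The `n × n` shift matrix `S` with `S_{i,i+1} = 1` and all other entries `0`. -/
def Smat (n : ℕ) : Matrix (Fin n) (Fin n) ℝ :=
  Matrix.of fun i j => if (i : ℕ) + 1 = (j : ℕ) then 1 else 0

/-- The last standard basis vector `g` of `ℝⁿ`. -/
def gvec (n : ℕ) : Fin n → ℝ := fun i => if (i : ℕ) = n - 1 then 1 else 0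

/-- `Π = I − g·gᵀ`, the orthogonal projection onto the orthogonal complement of `g`. -/
def Pimat (n : ℕ) : Matrix (Fin n) (Fin n) ℝ := 1 - vecMulVec (gvec n) (gvec n)

/-!
Since `X` is symmetric, `(S + g hᵀ) X + X (S + g hᵀ)ᵀ = S X + X Sᵀ + g (X h)ᵀ + (X h) gᵀ`, so the
hypothesis reads `S Z + Z Sᵀ + g vᵀ + v gᵀ = 0` with `v = X h + Y k`. As `Π g = 0`, multiplying by
`Π` on both sides gives (i). Applying it to `g` and using `Sᵀ g = 0`, `⟨g, g⟩ = 1` gives first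
`⟨v, g⟩ = 0` and then `S Z g + v = 0`, which is (ii) because `⟨w, k - h⟩ w = Y (k - h)` and
`Z h + Y (k - h) = v`.

If `Y (k - h) = 0`, then `B` acts on `Y` as `A` does, so `A Z + Z Aᵀ = 0`. Stability of `A` makes
the spectra of `A` and `-Aᵀ` disjoint, and a Sylvester equation `A Z = Z N` with disjoint spectra
only has the solution `Z = 0` (apply the characteristic polynomial of `A`). Then `X + Y = 0` forces
`X = 0`. Finally `Z - w wᵀ = X + (Y - (Y u) (Y u)ᵀ / ⟨u, Y u⟩)`, and the second summand is positive
semidefinite by the Cauchy–Schwarz inequality for the form of `Y`.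
-/

open Polynomial
open scoped MatrixOrder

theorem SemiconjBy.aeval_right {R A : Type*} [CommSemiring R] [Semiring A] [Algebra R A]
    {z a b : A} (h : SemiconjBy z a b) (p : R[X]) : SemiconjBy z (aeval a p) (aeval b p) := by
  induction p using Polynomial.induction_on' with
  | add p q hp hq => simpa only [map_add] using hp.add_right hq
  | monomial k r =>
    simp only [aeval_monomial]
    exact SemiconjBy.mul_right (Algebra.commute_algebraMap_right r z) (h.pow_right k)

namespace Matrix

variable {K ι : Type*} [Fintype ι]

section Spectrum

variable [DecidableEq ι]

theorem eq_zero_of_mul_eq_mul_of_disjoint_spectrum [Field K] [IsAlgClosed K]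
    {A N Z : Matrix ι ι K} (hAN : Disjoint (spectrum K A) (spectrum K N)) (h : A * Z = Z * N) :
    Z = 0 := by
  cases isEmpty_or_nonempty ι
  · exact Subsingleton.elim _ _
  have hdeg : 0 < A.charpoly.degree := by
    rw [charpoly_degree_eq_dim]; exact_mod_cast Fintype.card_pos
  have hunit : IsUnit (aeval N A.charpoly) := by
    by_contra hnot
    rw [← spectrum.zero_mem_iff K, spectrum.map_polynomial_aeval_of_degree_pos _ _ hdeg] at hnot
    obtain ⟨μ, hμN, hμ⟩ := hnot
    exact hAN.ne_of_mem (mem_spectrum_iff_isRoot_charpoly.2 hμ) hμN rfl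
  have hsemi : SemiconjBy Z (aeval N A.charpoly) (aeval A A.charpoly) :=
    SemiconjBy.aeval_right h.symm _
  rw [← hunit.mul_left_eq_zero, hsemi.eq, aeval_self_charpoly, zero_mul]

theorem spectrum_transpose [Field K] (A : Matrix ι ι K) : spectrum K Aᵀ = spectrum K A := by
  ext μ
  simp only [mem_spectrum_iff_isRoot_charpoly, charpoly_transpose]

end Spectrum

theorem add_vecMulVec_mul_add_mul_transpose {R : Type*} [CommRing R] (S X : Matrix ι ι R)
    (g h : ι → R) (hX : X.IsSymm) :
    (S + vecMulVec g h) * X + X * (S + vecMulVec g h)ᵀ =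
      S * X + X * Sᵀ + vecMulVec g (X *ᵥ h) + vecMulVec (X *ᵥ h) g := by
  rw [transpose_add, transpose_vecMulVec, add_mul, mul_add, vecMulVec_mul, mul_vecMulVec,
    ← mulVec_transpose, hX.eq]
  abel

theorem IsSymm.dotProduct_mulVec_comm {R : Type*} [CommSemiring R] {Y : Matrix ι ι R}
    (hY : Y.IsSymm) (x u : ι → R) : u ⬝ᵥ Y *ᵥ x = x ⬝ᵥ Y *ᵥ u := by
  rw [dotProduct_mulVec, ← mulVec_transpose, hY.eq, dotProduct_comm]

namespace PosSemidef

variable {Y : Matrix ι ι ℝ}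

theorem dotProduct_mulVec_pos_iff (hY : Y.PosSemidef) {u : ι → ℝ} :
    0 < u ⬝ᵥ Y *ᵥ u ↔ Y *ᵥ u ≠ 0 := by
  have hzero := (hY.dotProduct_mulVec_zero_iff u).not
  rw [star_trivial] at hzero
  rw [(by simpa using hY.dotProduct_mulVec_nonneg u : 0 ≤ u ⬝ᵥ Y *ᵥ u).lt_iff_ne']
  exact hzero

theorem dotProduct_mulVec_sq_le (hY : Y.PosSemidef) (x u : ι → ℝ) :
    (x ⬝ᵥ Y *ᵥ u) ^ 2 ≤ (x ⬝ᵥ Y *ᵥ x) * (u ⬝ᵥ Y *ᵥ u) := by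
  classical
  have hcs := LinearMap.BilinForm.apply_mul_apply_le_of_forall_zero_le (toLinearMap₂' ℝ Y)
    (fun x => by simpa [toLinearMap₂'_apply'] using hY.dotProduct_mulVec_nonneg x) x u
  simpa only [toLinearMap₂'_apply', (isHermitian_iff_isSymm.1 hY.1).dotProduct_mulVec_comm, ← sq]
    using hcs

theorem sub_vecMulVec_inv_sqrt_smul_mulVec (hY : Y.PosSemidef) (u : ι → ℝ) :
    (Y - vecMulVec ((√(u ⬝ᵥ Y *ᵥ u))⁻¹ • Y *ᵥ u) ((√(u ⬝ᵥ Y *ᵥ u))⁻¹ • Y *ᵥ u)).PosSemidef := by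
  set q := u ⬝ᵥ Y *ᵥ u
  set w := (√q)⁻¹ • Y *ᵥ u
  have hq : 0 ≤ q := by simpa using hY.dotProduct_mulVec_nonneg u
  have hinv : (√q)⁻¹ ^ 2 = q⁻¹ := by rw [inv_pow, Real.sq_sqrt hq]
  have hw : ∀ x, x ⬝ᵥ vecMulVec w w *ᵥ x = (x ⬝ᵥ Y *ᵥ u) ^ 2 / q := by
    intro x
    simp only [w, vecMulVec_mulVec, op_smul_eq_smul, dotProduct_smul, smul_dotProduct,
      smul_eq_mul, dotProduct_comm (Y *ᵥ u) x]
    rw [div_eq_mul_inv, ← hinv]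
    ring
  refine of_dotProduct_mulVec_nonneg
    (hY.isHermitian.sub (by simpa using (posSemidef_vecMulVec_self_star w).isHermitian)) fun x => ?_
  rw [star_trivial, sub_mulVec, dotProduct_sub, hw, sub_nonneg]
  exact div_le_of_le_mul₀ hq (by simpa using hY.dotProduct_mulVec_nonneg x)
    (by simpa only [mul_comm q] using hY.dotProduct_mulVec_sq_le x u)

end PosSemidef

end Matrix

theorem inv_sqrt_smul_dotProduct_smul_inv_sqrt_smul {ι : Type*} [Fintype ι] {a u : ι → ℝ}
    (hq : 0 < u ⬝ᵥ a) : ((√(u ⬝ᵥ a))⁻¹ • a ⬝ᵥ u) • ((√(u ⬝ᵥ a))⁻¹ • a) = a := by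
  rw [smul_dotProduct, dotProduct_comm a u, smul_smul, smul_eq_mul, mul_right_comm,
    ← Real.sqrt_inv, Real.mul_self_sqrt (inv_nonneg.2 hq.le), inv_mul_cancel₀ hq.ne', one_smul]

theorem IsStable.eq_zero_of_mul_add_mul_transpose_eq_zero {n : ℕ} {A Z : Matrix (Fin n) (Fin n) ℝ}
    (hA : IsStable A) (h : A * Z + Z * Aᵀ = 0) : Z = 0 := by
  have hdisj : Disjoint (spectrum ℂ (A.map (algebraMap ℝ ℂ)))
      (spectrum ℂ (-(A.map (algebraMap ℝ ℂ))ᵀ)) := by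
    rw [Set.disjoint_left]
    intro μ hμ hμ'
    rw [← spectrum.neg_eq, spectrum_transpose, Set.mem_neg] at hμ'
    linarith [hA μ hμ, hA (-μ) hμ', Complex.neg_re μ]
  have hmap : A.map (algebraMap ℝ ℂ) * Z.map (algebraMap ℝ ℂ) =
      Z.map (algebraMap ℝ ℂ) * -(A.map (algebraMap ℝ ℂ))ᵀ := by
    rw [mul_neg, eq_neg_iff_add_eq_zero, ← transpose_map, ← Matrix.map_mul, ← Matrix.map_mul,
      ← Matrix.map_add _ (map_add _), h, Matrix.map_zero _ (map_zero _)]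
  ext i j
  simpa using congrFun₂ (eq_zero_of_mul_eq_mul_of_disjoint_spectrum hdisj hmap) i j

theorem IsStable.dotProduct_mulVec_sub_pos {n : ℕ} {S X Y : Matrix (Fin n) (Fin n) ℝ}
    {g h k : Fin n → ℝ} (hA : IsStable (S + vecMulVec g h)) (hX0 : X ≠ 0) (hX : X.PosSemidef)
    (hY : Y.PosSemidef)
    (heq : (S + vecMulVec g h) * X + X * (S + vecMulVec g h)ᵀ +
      (S + vecMulVec g k) * Y + Y * (S + vecMulVec g k)ᵀ = 0) :
    0 < (k - h) ⬝ᵥ Y *ᵥ (k - h) := by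
  have hYs := isHermitian_iff_isSymm.1 hY.1
  refine hY.dotProduct_mulVec_pos_iff.2 fun hYu => hX0 ?_
  have hBY : (S + vecMulVec g k) * Y + Y * (S + vecMulVec g k)ᵀ =
      (S + vecMulVec g h) * Y + Y * (S + vecMulVec g h)ᵀ := by
    rw [mulVec_sub, sub_eq_zero] at hYu
    rw [add_vecMulVec_mul_add_mul_transpose _ _ _ _ hYs,
      add_vecMulVec_mul_add_mul_transpose _ _ _ _ hYs, hYu]
  have hZ : (S + vecMulVec g h) * (X + Y) + (X + Y) * (S + vecMulVec g h)ᵀ = 0 := by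
    rw [← heq, add_assoc _ (_ * Y), hBY, mul_add _ X Y, add_mul X Y]
    abel
  exact ((add_eq_zero_iff_of_nonneg hX.nonneg hY.nonneg).1
    (hA.eq_zero_of_mul_add_mul_transpose_eq_zero hZ)).1

section Companion

variable {n : ℕ}

theorem gvec_vecMul_Smat : gvec n ᵥ* Smat n = 0 := by
  ext j
  simp only [vecMul, dotProduct, gvec, Smat, of_apply, Pi.zero_apply]
  refine Finset.sum_eq_zero fun i _ => ?_
  have := j.isLt
  split_ifs <;> first | omega | simp

theorem Smat_transpose_mulVec_gvec : (Smat n)ᵀ *ᵥ gvec n = 0 := by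
  rw [mulVec_transpose, gvec_vecMul_Smat]

theorem gvec_dotProduct_gvec (hn : 0 < n) : gvec n ⬝ᵥ gvec n = 1 := by
  rw [dotProduct, Finset.sum_eq_single (⟨n - 1, by omega⟩ : Fin n)]
  · simp [gvec]
  · intro i _ hi
    have : (i : ℕ) ≠ n - 1 := fun h => hi (Fin.ext h)
    simp [gvec, this]
  · simp

theorem Pimat_mulVec_gvec (hn : 0 < n) : Pimat n *ᵥ gvec n = 0 := by
  rw [Pimat, sub_mulVec, one_mulVec, vecMulVec_mulVec, gvec_dotProduct_gvec hn,
    MulOpposite.op_one, one_smul, sub_self]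

theorem gvec_vecMul_Pimat (hn : 0 < n) : gvec n ᵥ* Pimat n = 0 := by
  rw [Pimat, vecMul_sub, vecMul_one, vecMul_vecMulVec, gvec_dotProduct_gvec hn, one_smul, sub_self]

variable {Z : Matrix (Fin n) (Fin n) ℝ} {v : Fin n → ℝ}

theorem Pimat_mul_Smat_mul_mul_Pimat_add_eq_zero (hn : 0 < n)
    (hred : Smat n * Z + Z * (Smat n)ᵀ + vecMulVec (gvec n) v + vecMulVec v (gvec n) = 0) :
    Pimat n * Smat n * Z * Pimat n + Pimat n * Z * (Smat n)ᵀ * Pimat n = 0 := by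
  have hleft : Pimat n * (vecMulVec (gvec n) v * Pimat n) = 0 := by
    rw [← Matrix.mul_assoc, mul_vecMulVec, Pimat_mulVec_gvec hn, zero_vecMulVec, zero_mul]
  have hright : Pimat n * (vecMulVec v (gvec n) * Pimat n) = 0 := by
    rw [vecMulVec_mul, gvec_vecMul_Pimat hn, vecMulVec_zero, mul_zero]
  simpa only [mul_add, add_mul, Matrix.mul_assoc, hleft, hright, add_zero, mul_zero, zero_mul]
    using congrArg (fun M => Pimat n * M * Pimat n) hred

theorem Smat_mul_mulVec_gvec_add_eq_zero (hn : 0 < n)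
    (hred : Smat n * Z + Z * (Smat n)ᵀ + vecMulVec (gvec n) v + vecMulVec v (gvec n) = 0) :
    (Smat n * Z) *ᵥ gvec n + v = 0 := by
  have hg : (Smat n * Z) *ᵥ gvec n + (v ⬝ᵥ gvec n) • gvec n + v = 0 := by
    simpa only [add_mulVec, zero_mulVec, ← mulVec_mulVec (gvec n) Z, Smat_transpose_mulVec_gvec,
      mulVec_zero, vecMulVec_mulVec, op_smul_eq_smul, gvec_dotProduct_gvec hn, one_smul,
      add_zero] using congrArg (· *ᵥ gvec n) hred
  have hvg : v ⬝ᵥ gvec n = 0 := by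
    have := congrArg (gvec n ⬝ᵥ ·) hg
    simp only [dotProduct_add, dotProduct_smul, smul_eq_mul, dotProduct_zero,
      dotProduct_mulVec (gvec n) (Smat n * Z), ← vecMul_vecMul, gvec_vecMul_Smat, zero_vecMul,
      zero_dotProduct, gvec_dotProduct_gvec hn, dotProduct_comm (gvec n) v] at this
    linarith
  rwa [hvg, zero_smul, add_zero] at hg

end Companion

theorem XY_solution_gives_Z_w_general {n : ℕ} (hn : 0 < n) (h k : Fin n → ℝ)
    (hA : IsStable (Smat n + vecMulVec (gvec n) h))
    (X Y : Matrix (Fin n) (Fin n) ℝ) (hX0 : X ≠ 0)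
    (hX : X.PosSemidef) (hY : Y.PosSemidef)
    (heq : (Smat n + vecMulVec (gvec n) h) * X + X * (Smat n + vecMulVec (gvec n) h)ᵀ +
      (Smat n + vecMulVec (gvec n) k) * Y + Y * (Smat n + vecMulVec (gvec n) k)ᵀ = 0) :
    0 < (k - h) ⬝ᵥ Y.mulVec (k - h) ∧
    (Pimat n * Smat n * (X + Y) * Pimat n + Pimat n * (X + Y) * (Smat n)ᵀ * Pimat n = 0 ∧
     (Smat n * (X + Y)).mulVec (gvec n) + (X + Y).mulVec h +
       ((Real.sqrt ((k - h) ⬝ᵥ Y.mulVec (k - h)))⁻¹ • Y.mulVec (k - h) ⬝ᵥ (k - h)) •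
         ((Real.sqrt ((k - h) ⬝ᵥ Y.mulVec (k - h)))⁻¹ • Y.mulVec (k - h)) = 0 ∧
     ((X + Y) - vecMulVec ((Real.sqrt ((k - h) ⬝ᵥ Y.mulVec (k - h)))⁻¹ • Y.mulVec (k - h))
        ((Real.sqrt ((k - h) ⬝ᵥ Y.mulVec (k - h)))⁻¹ • Y.mulVec (k - h))).PosSemidef) := by
  have hXs := isHermitian_iff_isSymm.1 hX.1
  have hYs := isHermitian_iff_isSymm.1 hY.1
  have hred : Smat n * (X + Y) + (X + Y) * (Smat n)ᵀ + vecMulVec (gvec n) (X *ᵥ h + Y *ᵥ k) +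
      vecMulVec (X *ᵥ h + Y *ᵥ k) (gvec n) = 0 := by
    rw [← heq, add_assoc _ (_ * Y), add_vecMulVec_mul_add_mul_transpose _ _ _ _ hXs,
      add_vecMulVec_mul_add_mul_transpose _ _ _ _ hYs, vecMulVec_add, add_vecMulVec, mul_add,
      add_mul]
    abel
  have hq : 0 < (k - h) ⬝ᵥ Y *ᵥ (k - h) := hA.dotProduct_mulVec_sub_pos hX0 hX hY heq
  refine ⟨hq, Pimat_mul_Smat_mul_mul_Pimat_add_eq_zero hn hred, ?_, ?_⟩
  · have hv : (X + Y) *ᵥ h + Y *ᵥ (k - h) = X *ᵥ h + Y *ᵥ k := by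
      rw [add_mulVec, mulVec_sub]
      abel
    rw [inv_sqrt_smul_dotProduct_smul_inv_sqrt_smul hq, add_assoc, hv]
    exact Smat_mul_mulVec_gvec_add_eq_zero hn hred
  · rw [add_sub_assoc]
    exact hX.add (hY.sub_vecMulVec_inv_sqrt_smul_mulVec _)

/-- From a nonzero positive semidefinite solution `(X, Y)` of
`A·X + X·Aᵀ + B·Y + Y·Bᵀ = 0` for stable companion-form matrices `A = S + g·hᵀ`,
`B = S + g·kᵀ`, the matrix `Z = X + Y` and the vector
`w = ⟨k−h, Y(k−h)⟩^{−1/2}·Y(k−h)` satisfy the reduced system (i)–(iii). -/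
theorem XY_solution_gives_Z_w {n : ℕ} (hn : 0 < n) (h k : Fin n → ℝ)
    (hA : IsStable (Smat n + vecMulVec (gvec n) h))
    (hB : IsStable (Smat n + vecMulVec (gvec n) k))
    (X Y : Matrix (Fin n) (Fin n) ℝ) (hX0 : X ≠ 0) (hY0 : Y ≠ 0)
    (hX : X.PosSemidef) (hY : Y.PosSemidef)
    (heq : (Smat n + vecMulVec (gvec n) h) * X + X * (Smat n + vecMulVec (gvec n) h)ᵀ +
      (Smat n + vecMulVec (gvec n) k) * Y + Y * (Smat n + vecMulVec (gvec n) k)ᵀ = 0) :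
    0 < (k - h) ⬝ᵥ Y.mulVec (k - h) ∧
    (Pimat n * Smat n * (X + Y) * Pimat n + Pimat n * (X + Y) * (Smat n)ᵀ * Pimat n = 0 ∧
     (Smat n * (X + Y)).mulVec (gvec n) + (X + Y).mulVec h +
       ((Real.sqrt ((k - h) ⬝ᵥ Y.mulVec (k - h)))⁻¹ • Y.mulVec (k - h) ⬝ᵥ (k - h)) •
         ((Real.sqrt ((k - h) ⬝ᵥ Y.mulVec (k - h)))⁻¹ • Y.mulVec (k - h)) = 0 ∧
     ((X + Y) - vecMulVec ((Real.sqrt ((k - h) ⬝ᵥ Y.mulVec (k - h)))⁻¹ • Y.mulVec (k - h))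
        ((Real.sqrt ((k - h) ⬝ᵥ Y.mulVec (k - h)))⁻¹ • Y.mulVec (k - h))).PosSemidef) :=
  XY_solution_gives_Z_w_general hn h k hA X Y hX0 hX hY heq
end

section
/- For every real x and every h ∈ ℝⁿ, the vector ξ = S·Z(x)·g + Z(x)·h lies in the range of Z(x). -/
open Matrix

/-- The signed Hankel rank-two matrix `Z(x)`: in 0-based indexing, the `(i,j)` entry is `0`
if `i+j` is odd and `(−1)^{(i−j)/2} x^{(i+j)/2}` if `i+j` is even. -/
noncomputable def Zxmat (n : ℕ) (x : ℝ) : Matrix (Fin n) (Fin n) ℝ :=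
  Matrix.of fun i j =>
    if ((i : ℕ) + (j : ℕ)) % 2 = 1 then 0
    else (-1 : ℝ) ^ (((i : ℤ) - (j : ℤ)) / 2) * x ^ (((i : ℕ) + (j : ℕ)) / 2)

/-!
Moving one step down the diagonal multiplies an entry of `Z(x)` by `x`. Hence for `n ≥ 2` the
vector `S Z(x) g`, the last column of `Z(x)` shifted up by one, is `x` times the column `n - 2`
of `Z(x)`: the entry that the shift discards is `Z(x)_{n-1,n-2} = 0`, as `2n - 3` is odd. So
`ξ = Z(x) (x e_{n-2} + h)`; for `n ≤ 1` the matrix `S` vanishes and `ξ = Z(x) h`.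
-/

lemma Smat_mulVec_apply {n : ℕ} (v : Fin n → ℝ) (i : Fin n) :
    (Smat n *ᵥ v) i = if hi : (i : ℕ) + 1 < n then v ⟨i + 1, hi⟩ else 0 := by
  simp only [mulVec, dotProduct, Smat, of_apply, ite_mul, one_mul, zero_mul]
  split_ifs with hi
  · rw [Fintype.sum_eq_single ⟨i + 1, hi⟩ fun j hj => if_neg fun e => hj (Fin.ext e.symm)]
    exact if_pos rfl
  · exact Finset.sum_eq_zero fun j _ => if_neg (by omega)

lemma Smat_eq_zero_of_le_one {n : ℕ} (hn : n ≤ 1) : Smat n = 0 := by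
  ext i j
  simp only [Smat, of_apply, Matrix.zero_apply]
  exact if_neg (by omega)

lemma Zxmat_apply_of_odd {n : ℕ} (x : ℝ) {i j : Fin n} (hij : ((i : ℕ) + j) % 2 = 1) :
    Zxmat n x i j = 0 := if_pos hij

lemma Zxmat_apply_succ_succ {n : ℕ} (x : ℝ) (i j : Fin n) (hi : (i : ℕ) + 1 < n)
    (hj : (j : ℕ) + 1 < n) :
    Zxmat n x ⟨i + 1, hi⟩ ⟨j + 1, hj⟩ = x * Zxmat n x i j := by
  simp only [Zxmat, of_apply]
  rw [show (i + 1 + (j + 1)) % 2 = (i + j : ℕ) % 2 by omega,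
    show (i + 1 + (j + 1)) / 2 = (i + j : ℕ) / 2 + 1 by omega]
  push_cast
  split_ifs <;> ring_nf

lemma gvec_eq_single (n : ℕ) : gvec (n + 1) = Pi.single (Fin.last n) 1 := by
  ext i
  simp only [gvec, Pi.single_apply, Fin.ext_iff, Fin.val_last, Nat.add_sub_cancel]

lemma Smat_mul_Zxmat_mulVec_gvec (n : ℕ) (x : ℝ) :
    (Smat (n + 2) * Zxmat (n + 2) x) *ᵥ gvec (n + 2) =
      Zxmat (n + 2) x *ᵥ Pi.single (⟨n, by omega⟩ : Fin (n + 2)) x := by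
  ext i
  rw [← mulVec_mulVec, gvec_eq_single, mulVec_single_one, Smat_mulVec_apply, mulVec_single]
  simp only [Pi.smul_apply, col_apply, op_smul_eq_mul]
  split_ifs with hi
  · rw [mul_comm]
    exact Zxmat_apply_succ_succ x i ⟨n, by omega⟩ hi (Nat.lt_succ_self _)
  · rw [Zxmat_apply_of_odd x (show ((i : ℕ) + n) % 2 = 1 by omega), zero_mul]

theorem xi_mem_range_Zx_general {n : ℕ} (x : ℝ) (h : Fin n → ℝ) :
    ∃ y : Fin n → ℝ, (Zxmat n x).mulVec y =
      (Smat n * Zxmat n x).mulVec (gvec n) + (Zxmat n x).mulVec h := by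
  obtain _ | _ | n := n
  · exact ⟨h, Subsingleton.elim _ _⟩
  · refine ⟨h, ?_⟩
    rw [Smat_eq_zero_of_le_one le_rfl, Matrix.zero_mul, zero_mulVec]
    exact (zero_add _).symm
  · exact ⟨_, by rw [Smat_mul_Zxmat_mulVec_gvec, ← mulVec_add]⟩

/-- For every `x` and `h`, the vector `ξ = S·Z(x)·g + Z(x)·h` lies in the range of `Z(x)`. -/
theorem xi_mem_range_Zx {n : ℕ} (hn : 0 < n) (x : ℝ) (h : Fin n → ℝ) :
    ∃ y : Fin n → ℝ, (Zxmat n x).mulVec y =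
      (Smat n * Zxmat n x).mulVec (gvec n) + (Zxmat n x).mulVec h :=
  xi_mem_range_Zx_general x h
end

section
/- Let A = S + g·hᵀ be a stable real n×n matrix in companion form. Then for every real x ≥ 0 the vector S·Z(x)·g + Z(x)·h is nonzero. -/
open Matrix Complex

noncomputable def zf (x : ℝ) (i j : ℕ) : ℝ :=
  if (i + j) % 2 = 1 then 0
  else (-1 : ℝ) ^ (((i : ℤ) - (j : ℤ)) / 2) * x ^ ((i + j) / 2)

lemma Zxmat_apply {n : ℕ} (x : ℝ) (i j : Fin n) : Zxmat n x i j = zf x (i : ℕ) (j : ℕ) := rfl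

lemma zf_odd (x : ℝ) {i j : ℕ} (hij : (i + j) % 2 = 1) : zf x i j = 0 := if_pos hij

lemma zf_0_even (x : ℝ) (k : ℕ) : zf x 0 (2*k) = (-1)^k * x^k := by
  have e1 : (((0:ℕ):ℤ) - ((2*k:ℕ):ℤ))/2 = -(k:ℤ) := by push_cast; omega
  have e2 : (0 + 2*k)/2 = k := by omega
  rw [zf, if_neg (by omega), e1, e2, _root_.zpow_neg, zpow_natCast, ← inv_pow, inv_neg, inv_one]

lemma zf_1_odd (x : ℝ) (k : ℕ) : zf x 1 (2*k+1) = (-1)^k * x^(k+1) := by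
  have e1 : (((1:ℕ):ℤ) - ((2*k+1:ℕ):ℤ))/2 = -(k:ℤ) := by push_cast; omega
  have e2 : (1 + (2*k+1))/2 = k+1 := by omega
  rw [zf, if_neg (by omega), e1, e2, _root_.zpow_neg, zpow_natCast, ← inv_pow, inv_neg, inv_one]

lemma zf_2_even (x : ℝ) (k : ℕ) : zf x 2 (2*k) = -((-1)^k * x^(k+1)) := by
  have e1 : (((2:ℕ):ℤ) - ((2*k:ℕ):ℤ))/2 = 1-(k:ℤ) := by push_cast; omega
  have e2 : (2 + 2*k)/2 = k+1 := by omega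
  rw [zf, if_neg (by omega), e1, e2, sub_eq_add_neg,
    zpow_add₀ (by norm_num : (-1:ℝ) ≠ 0), zpow_one, _root_.zpow_neg, zpow_natCast,
    ← inv_pow, inv_neg, inv_one]
  ring

lemma zf_x0 (i j : ℕ) : zf 0 i j = if i = 0 ∧ j = 0 then 1 else 0 := by
  rcases Nat.eq_zero_or_pos (i + j) with h0 | hp
  · have hi : i = 0 := by omega
    have hj : j = 0 := by omega
    subst hi; subst hj
    norm_num [zf]
  · rw [if_neg (by omega)]
    by_cases hij : (i + j) % 2 = 1
    · exact zf_odd 0 hij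
    · rw [zf, if_neg hij, zero_pow (by omega), mul_zero]

lemma Isq' (s : ℝ) : (I*(s:ℂ))^2 = -((s:ℂ)^2) := by rw [mul_pow, I_sq]; ring

lemma Ipow_even (s : ℝ) (k : ℕ) : (I*(s:ℂ))^(2*k) = (-1)^k * (s:ℂ)^(2*k) := by
  rw [pow_mul, Isq', neg_pow, pow_mul]

lemma Ipow_odd (s : ℝ) (k : ℕ) : (I*(s:ℂ))^(2*k+1) = (-1)^k * (s:ℂ)^(2*k) * (I*s) := by
  rw [pow_succ, Ipow_even]

lemma Fkey (s : ℝ) (j : ℕ) :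
    (s:ℂ) * (zf (s^2) 0 j : ℝ) + I * (zf (s^2) 1 j : ℝ) = s * (I*s)^j := by
  rcases Nat.even_or_odd j with ⟨k, hk⟩ | ⟨k, hk⟩
  · have : j = 2*k := by omega
    subst this
    rw [zf_0_even, zf_odd (s^2) (by omega), Ipow_even]
    push_cast; ring
  · subst hk
    rw [zf_odd (s^2) (by omega), zf_1_odd, Ipow_odd]
    push_cast; ring

lemma Gkey (s : ℝ) (j : ℕ) :
    (s:ℂ) * (zf (s^2) 1 j : ℝ) + I * (zf (s^2) 2 j : ℝ) = -(s * (I*s)^(j+1)) := by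
  rcases Nat.even_or_odd j with ⟨k, hk⟩ | ⟨k, hk⟩
  · have : j = 2*k := by omega
    subst this
    rw [zf_odd (s^2) (by omega), zf_2_even, Ipow_odd]
    push_cast; ring
  · subst hk
    rw [zf_1_odd, zf_odd (s^2) (by omega)]
    have : 2*k+1+1 = 2*(k+1) := by omega
    rw [this, Ipow_even]
    push_cast; ring

lemma mulVec_Z_h {n : ℕ} (x : ℝ) (h : Fin n → ℝ) (i : Fin n) :
    ((Zxmat n x).mulVec h) i = ∑ j : Fin n, zf x (i:ℕ) (j:ℕ) * h j := rfl

lemma mulVec_SZ_g {n : ℕ} (x : ℝ) (i : Fin n) :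
    ((Smat n * Zxmat n x).mulVec (gvec n)) i = zf x ((i:ℕ)+1) (n-1) := by
  have hn : 0 < n := i.pos
  have h1 : ((Smat n * Zxmat n x).mulVec (gvec n)) i
      = (Smat n * Zxmat n x) i ⟨n-1, by omega⟩ := by
    simp only [mulVec, dotProduct, gvec]
    rw [Finset.sum_eq_single (⟨n-1, by omega⟩ : Fin n)]
    · simp
    · intro b _ hb
      rw [if_neg, mul_zero]
      exact fun hbv => hb (Fin.ext hbv)
    · simp
  rw [h1, Matrix.mul_apply]
  by_cases hi : (i:ℕ)+1 < n
  · rw [Finset.sum_eq_single (⟨(i:ℕ)+1, hi⟩ : Fin n)]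
    · rw [Zxmat_apply, Smat]
      simp
    · intro b _ hb
      rw [Smat]
      simp only [Matrix.of_apply]
      rw [if_neg, zero_mul]
      exact fun hbv => hb (Fin.ext hbv.symm)
    · simp
  · rw [Finset.sum_eq_zero, zf_odd]
    · omega
    · intro b _
      have hb := b.is_lt
      rw [Smat]
      simp only [Matrix.of_apply]
      rw [if_neg (by omega), zero_mul]

lemma mem_spectrum_of_root {n : ℕ} (hn : 0 < n) (h : Fin n → ℝ) (μ : ℂ)
    (hroot : μ ^ n = ∑ j : Fin n, (h j : ℂ) * μ ^ (j : ℕ)) :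
    μ ∈ spectrum ℂ ((Smat n + vecMulVec (gvec n) h).map (algebraMap ℝ ℂ)) := by
  rw [spectrum.mem_iff]
  intro hU
  obtain ⟨B, hB⟩ := hU.exists_left_inv
  set A' := (Smat n + vecMulVec (gvec n) h).map (algebraMap ℝ ℂ) with hA'
  set v : Fin n → ℂ := fun i => μ ^ (i : ℕ) with hv
  have hMv : (algebraMap ℂ (Matrix (Fin n) (Fin n) ℂ) μ - A').mulVec v = 0 := by
    funext i
    have hAv : (A'.mulVec v) i = μ * μ ^ (i : ℕ) := by
      simp only [mulVec, dotProduct, hA', map_apply, Matrix.add_apply, Smat, vecMulVec_apply,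
        gvec, Matrix.of_apply, hv]
      by_cases hi : (i:ℕ) + 1 < n
      · have hine : ¬ ((i:ℕ) = n - 1) := by omega
        rw [Finset.sum_eq_single (⟨(i:ℕ)+1, hi⟩ : Fin n)]
        · simp [hine, pow_succ, mul_comm]
        · intro b _ hb
          have : ¬ ((i:ℕ) + 1 = (b:ℕ)) := fun hc => hb (Fin.ext hc.symm)
          simp [this, hine]
        · simp
      · have hie : (i:ℕ) = n - 1 := by omega
        have : ∀ b : Fin n, b ∈ Finset.univ →
            (algebraMap ℝ ℂ ((if (i:ℕ) + 1 = (b:ℕ) then (1:ℝ) else 0)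
              + (if (i:ℕ) = n - 1 then (1:ℝ) else 0) * h b)) * μ ^ (b:ℕ)
            = (h b : ℂ) * μ ^ (b:ℕ) := by
          intro b _
          have hb := b.is_lt
          rw [if_neg (by omega), if_pos hie]
          push_cast [Complex.coe_algebraMap]
          ring
        rw [Finset.sum_congr rfl this, ← hroot]
        have : μ ^ n = μ * μ ^ (i:ℕ) := by
          rw [← pow_succ']
          congr 1
          omega
        rw [this]
    simp only [Matrix.sub_mulVec, Pi.sub_apply, Pi.zero_apply, hAv]
    have hsc : ((algebraMap ℂ (Matrix (Fin n) (Fin n) ℂ) μ).mulVec v) i = μ * μ ^ (i:ℕ) := by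
      simp only [mulVec, dotProduct, algebraMap_matrix_apply]
      rw [Finset.sum_eq_single i]
      · simp [hv]
      · intro b _ hb
        simp [Ne.symm hb]
      · simp
    rw [hsc]
    ring
  have hv0 : v = 0 := by
    have := congrArg (fun w => B.mulVec w) hMv
    simpa [Matrix.mulVec_mulVec, hB, Matrix.one_mulVec] using this
  have : v ⟨0, hn⟩ = 1 := by simp [hv]
  rw [hv0] at this
  simp at this

/-- If `A = S + g·hᵀ` is stable, then for every `x ≥ 0` the vector
`S·Z(x)·g + Z(x)·h` is nonzero. -/
theorem xi_ne_zero_of_stable {n : ℕ} (hn : 0 < n) (h : Fin n → ℝ)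
    (hA : IsStable (Smat n + vecMulVec (gvec n) h)) :
    ∀ x : ℝ, 0 ≤ x →
      (Smat n * Zxmat n x).mulVec (gvec n) + (Zxmat n x).mulVec h ≠ 0 := by
  intro x hx hc
  have hξ : ∀ i : Fin n, zf x ((i:ℕ)+1) (n-1) + ∑ j : Fin n, zf x (i:ℕ) (j:ℕ) * h j = 0 := by
    intro i
    have := congrFun hc i
    rwa [Pi.add_apply, mulVec_SZ_g, mulVec_Z_h, Pi.zero_apply] at this
  by_cases hedge : x = 0 ∨ n = 1
  · have h0 : h ⟨0, hn⟩ = 0 := by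
      have e := hξ ⟨0, hn⟩
      rcases hedge with rfl | hn1
      · rw [Finset.sum_eq_single (⟨0, hn⟩ : Fin n)] at e
        · simpa [zf_x0] using e
        · intro b _ hb
          have hb0 : (b:ℕ) ≠ 0 := fun hc' => hb (Fin.ext hc')
          rw [zf_x0, if_neg (by simp [hb0]), zero_mul]
        · simp
      · subst hn1
        rw [Fin.sum_univ_one] at e
        have z1 : zf x (((⟨0, hn⟩ : Fin 1):ℕ)+1) (1-1) = 0 := zf_odd x (by omega)
        have z2 : zf x ((⟨0, hn⟩ : Fin 1):ℕ) ((0 : Fin 1):ℕ) = 1 := by norm_num [zf]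
        rw [z1, z2, zero_add, one_mul] at e
        exact e
    have hroot : (0:ℂ)^n = ∑ j : Fin n, (h j : ℂ) * (0:ℂ)^(j:ℕ) := by
      rw [zero_pow hn.ne', Finset.sum_eq_single (⟨0, hn⟩ : Fin n)]
      · simp [h0]
      · intro b _ hb
        have hb0 : (b:ℕ) ≠ 0 := fun hc' => hb (Fin.ext hc')
        simp [zero_pow hb0]
      · simp
    have := hA 0 (mem_spectrum_of_root hn h 0 hroot)
    simp at this
  · push_neg at hedge
    obtain ⟨hx0, hn1⟩ := hedge
    have hxpos : 0 < x := lt_of_le_of_ne hx (Ne.symm hx0)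
    have hn2 : 2 ≤ n := by omega
    set s := Real.sqrt x with hsdef
    have hs2 : s^2 = x := Real.sq_sqrt hx
    have hspos : 0 < s := Real.sqrt_pos.mpr hxpos
    have e0 := hξ ⟨0, by omega⟩
    have e1 := hξ ⟨1, by omega⟩
    simp only [Fin.val_mk, zero_add] at e0
    simp only [Fin.val_mk] at e1
    norm_num at e1
    rw [← hs2] at e0 e1
    have hc0 : (s:ℂ) * ((zf (s^2) 1 (n-1) + ∑ j : Fin n, zf (s^2) 0 (j:ℕ) * h j : ℝ) : ℂ)
             + I * ((zf (s^2) 2 (n-1) + ∑ j : Fin n, zf (s^2) 1 (j:ℕ) * h j : ℝ) : ℂ)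
             = (s:ℂ) * (∑ j : Fin n, (h j:ℂ) * (I*(s:ℂ))^(j:ℕ)) - (s:ℂ) * (I*(s:ℂ))^n := by
      push_cast
      rw [mul_add, mul_add, Finset.mul_sum, Finset.mul_sum, add_add_add_comm,
          ← Finset.sum_add_distrib]
      have hGn : (s:ℂ) * ((zf (s^2) 1 (n-1):ℝ):ℂ) + I * ((zf (s^2) 2 (n-1):ℝ):ℂ)
          = -((s:ℂ) * (I*(s:ℂ))^n) := by
        have := Gkey s (n-1)
        rwa [show n-1+1 = n by omega] at this
      rw [hGn]
      have hstep : ∀ j : Fin n,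
          (s:ℂ) * (((zf (s^2) 0 (j:ℕ):ℝ):ℂ) * ((h j:ℝ):ℂ))
            + I * (((zf (s^2) 1 (j:ℕ):ℝ):ℂ) * ((h j:ℝ):ℂ))
          = (s:ℂ) * (((h j:ℝ):ℂ) * (I*(s:ℂ))^(j:ℕ)) := by
        intro j
        have hF := Fkey s (j:ℕ)
        calc (s:ℂ) * (((zf (s^2) 0 (j:ℕ):ℝ):ℂ) * ((h j:ℝ):ℂ))
              + I * (((zf (s^2) 1 (j:ℕ):ℝ):ℂ) * ((h j:ℝ):ℂ))
            = ((s:ℂ) * ((zf (s^2) 0 (j:ℕ):ℝ):ℂ) + I * ((zf (s^2) 1 (j:ℕ):ℝ):ℂ)) * ((h j:ℝ):ℂ) := by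
              ring
          _ = ((s:ℂ) * (I*(s:ℂ))^(j:ℕ)) * ((h j:ℝ):ℂ) := by rw [hF]
          _ = _ := by ring
      rw [Finset.sum_congr rfl (fun j _ => hstep j), ← Finset.mul_sum]
      ring
    rw [e0, e1] at hc0
    have hsne : (s:ℂ) ≠ 0 := by
      simpa using (Complex.ofReal_ne_zero.mpr hspos.ne')
    have key : (I*(s:ℂ))^n = ∑ j : Fin n, (h j:ℂ) * (I*(s:ℂ))^(j:ℕ) := by
      have h2 : (s:ℂ) * (∑ j : Fin n, (h j:ℂ) * (I*(s:ℂ))^(j:ℕ)) = (s:ℂ) * (I*(s:ℂ))^n := by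
        have := hc0.symm
        simp only [Complex.ofReal_zero, mul_zero, add_zero] at this
        linear_combination this
      exact (mul_left_cancel₀ hsne h2).symm
    have hsp := hA (I*(s:ℂ)) (mem_spectrum_of_root hn h _ key)
    simp only [Complex.mul_re, Complex.I_re, Complex.I_im, Complex.ofReal_re,
      Complex.ofReal_im, zero_mul, one_mul, mul_zero, sub_zero, zero_sub, neg_zero] at hsp
    exact lt_irrefl 0 hsp
end
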